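/- arXiv:1306.5696 — 3 statements merged into one kernel-verified Lean document; each statement's English description precedes it below -/
import Mathlib

section
/- For the elementary Nielsen automorphism φ of the free group F(A) with basis A = {a, b, c₁, …, c_q}, defined by a ↦ ab, b ↦ b, c_j ↦ c_j, and for any reduced word w ∈ F(A) such that w·a is reduced (no cancellation between w and a), the image of the cylinder C¹_{w·a} under the boundary extension of φ equals the cylinder C¹_{φ(w)·a}. -/
open FreeGroup

variable {α : Type*}

/-- Inverse of a letter `(x, b)` in the alphabet `A ∪ A⁻¹`. -/
def linv (x : α × Bool) : α × Bool := (x.1, !x.2)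

/-- The boundary `∂F(A)`: infinite reduced words over `A ∪ A⁻¹`. -/
def Bd (α : Type*) : Type _ := {ξ : ℕ → α × Bool // ∀ n, ξ (n + 1) ≠ linv (ξ n)}

/-- The cylinder `C¹_w` of all infinite reduced words with prefix `w`. -/
def Cyl (w : List (α × Bool)) : Set (Bd α) :=
  {ξ | ∀ i, (h : i < w.length) → ξ.1 i = w.get ⟨i, h⟩}

/-- The length-`m` prefix of an infinite reduced word. -/
def pre (ξ : Bd α) (m : ℕ) : List (α × Bool) := List.ofFn (fun i : Fin m => ξ.1 i)

/-- `Φ` is the boundary extension of the automorphism `φ`: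
for every `ξ ∈ ∂F(A)`, the reduced words `φ(ξ|_m)` converge to `Φ ξ`. -/
def ExtendsBd [DecidableEq α] (φ : FreeGroup α ≃* FreeGroup α) (Φ : Bd α → Bd α) : Prop :=
  ∀ ξ : Bd α, ∀ k : ℕ, ∃ n : ℕ, ∀ m, n ≤ m →
    ((φ (FreeGroup.mk (pre ξ m))).toWord).take k = List.ofFn (fun i : Fin k => (Φ ξ).1 i)

/-- `Concat g ξ η` : `η` is the reduced concatenation `g · ξ` (left translation of a
boundary point by a group element): some terminal segment of (the reduced word of) `g`
cancels against an initial segment of `ξ`, and `η` is the concatenation of the rest. -/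
def Concat [DecidableEq α] (g : FreeGroup α) (ξ η : Bd α) : Prop :=
  ∃ ℓ : ℕ, ∃ hℓ : ℓ ≤ g.toWord.length,
    (∀ i, (h : i < ℓ) → ξ.1 i = linv (g.toWord.get ⟨g.toWord.length - 1 - i, by omega⟩)) ∧
    (∀ n : ℕ, η.1 n =
      if h : n < g.toWord.length - ℓ then g.toWord.get ⟨n, by omega⟩
      else ξ.1 (n - (g.toWord.length - ℓ) + ℓ))

/-- The vertex `g` of the Cayley tree lies on the bi-infinite geodesic from `ξ` to `η`. -/
def OnGeod [DecidableEq α] (g : FreeGroup α) (ξ η : Bd α) : Prop :=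
  ∃ ξ' η' : Bd α, Concat g⁻¹ ξ ξ' ∧ Concat g⁻¹ η η' ∧ ξ'.1 0 ≠ η'.1 0

/-- The double cylinder `C²_{[v,w]}`. -/
def DblCyl [DecidableEq α] (v w : FreeGroup α) : Set (Bd α × Bd α) :=
  {p | p.1 ≠ p.2 ∧ OnGeod v p.1 p.2 ∧ OnGeod w p.1 p.2}

/-- Letter-permuting automorphism: every generator maps to a single letter. -/
def IsPermAut [DecidableEq α] (φ : FreeGroup α ≃* FreeGroup α) : Prop :=
  ∀ x : α, ((φ (FreeGroup.of x)).toWord).length = 1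

/-- Elementary Nielsen automorphism: `a ↦ ab`, all other generators fixed. -/
def IsNielsenAut (φ : FreeGroup α ≃* FreeGroup α) : Prop :=
  ∃ a b : α, a ≠ b ∧ φ (FreeGroup.of a) = FreeGroup.of a * FreeGroup.of b ∧
    ∀ x : α, x ≠ a → φ (FreeGroup.of x) = FreeGroup.of x

/-!
On a reduced word, `a ↦ ab` acts letter by letter (`a ↦ ab`, `a⁻¹ ↦ b⁻¹a⁻¹`), and the only
cancellations are `a·b⁻¹ ↦ a` and `b·a⁻¹ ↦ a⁻¹`. So extending a word changes at most the last
letter of its image, and the image is at least half as long. Hence the images of the prefixes of a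
boundary point converge; the same holds for the inverse automorphism `a ↦ ab⁻¹`, whose limit map
is a right inverse of `Φ`. Neither map cancels a letter `a` against the letters after it, so
`φ` sends words beginning with `w·a` to words beginning with `φ(w)·a`, and its inverse goes back.
-/

open Filter

lemma List.dropLast_cons_prefix_cons {β : Type*} {x : β} {l l' : List β}
    (h : l.dropLast <+: l') : (x :: l).dropLast <+: x :: l' := by
  rcases eq_or_ne l [] with rfl | hl
  · exact List.nil_prefix
  · rw [List.dropLast_cons_of_ne_nil hl]; exact List.cons_prefix_cons.mpr ⟨rfl, h⟩

lemma List.take_eq_take_of_dropLast_prefix {β : Type*} {l L : List β} (h : l.dropLast <+: L)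
    {k : ℕ} (hk : k < l.length) : L.take k = l.take k := by
  obtain ⟨r, rfl⟩ := h
  rw [List.take_append_of_le_length (by rw [List.length_dropLast]; omega), List.dropLast_eq_take,
    List.take_take, min_eq_left (by omega)]

namespace Nielsen

variable [DecidableEq α] (a b : α) (ε : Bool)

/-- `ε = true` gives `a ↦ ab`, `ε = false` its inverse `a ↦ ab⁻¹`. -/
def letterImage (x : α × Bool) : List (α × Bool) :=
  if x = (a, true) then [(a, true), (b, ε)]
  else if x = (a, false) then [(b, !ε), (a, false)]
  else [x]

/-- The reduced image of a reduced word: letterwise substitution, cancelling the only pairs that can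
cancel, `a b^-ε ↦ a` and `b^ε a⁻¹ ↦ a⁻¹`. -/
def word : List (α × Bool) → List (α × Bool)
  | [] => []
  | [x] => letterImage a b ε x
  | x :: y :: t =>
    if x = (a, true) ∧ y = (b, !ε) then (a, true) :: word t
    else if x = (b, ε) ∧ y = (a, false) then (a, false) :: word t
    else letterImage a b ε x ++ word (y :: t)

lemma letterImage_ne_nil (x : α × Bool) : letterImage a b ε x ≠ [] := by
  unfold letterImage; split_ifs <;> simp

lemma word_ne_nil : ∀ {l : List (α × Bool)}, l ≠ [] → word a b ε l ≠ []
  | [x], _ => letterImage_ne_nil a b ε x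
  | x :: y :: t, _ => by rw [word.eq_3]; split_ifs <;> simp [letterImage_ne_nil]

lemma length_le_two_mul_length_word (l : List (α × Bool)) :
    l.length ≤ 2 * (word a b ε l).length := by
  induction l using word.induct a b ε with
  | case1 => simp [word]
  | case2 x =>
    have := List.length_pos_iff.mpr (letterImage_ne_nil a b ε x)
    simp only [word, List.length_singleton]; omega
  | case3 x y t h ih => rw [word.eq_3, if_pos h]; simp only [List.length_cons]; omega
  | case4 x y t h₁ h₂ ih =>
    rw [word.eq_3, if_neg h₁, if_pos h₂]; simp only [List.length_cons]; omega
  | case5 x y t h₁ h₂ ih =>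
    have := List.length_pos_iff.mpr (letterImage_ne_nil a b ε x)
    rw [word.eq_3, if_neg h₁, if_neg h₂, List.length_append]
    simp only [List.length_cons] at ih ⊢; omega

variable {a b}

lemma head?_letterImage (x : α × Bool) : (letterImage a b ε x).head? =
    some (if x = (a, false) then (b, !ε) else x) := by
  unfold letterImage; split_ifs <;> simp_all

lemma getLast?_letterImage (x : α × Bool) : (letterImage a b ε x).getLast? =
    some (if x = (a, true) then (b, ε) else x) := by
  unfold letterImage; split_ifs <;> simp_all

lemma head?_word (hab : a ≠ b) (y : α × Bool) (t : List (α × Bool)) :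
    ∃ z, (word a b ε (y :: t)).head? = some z ∧
      (y = (a, false) ∧ z = (b, !ε) ∨ y = (b, ε) ∧ z = (a, false) ∨ y ≠ (a, false) ∧ z = y) := by
  rcases t with _ | ⟨y', t⟩
  · simp only [word, head?_letterImage]; split_ifs <;> simp_all
  · rw [word.eq_3]
    split_ifs with h₁ h₂
    · obtain ⟨rfl, -⟩ := h₁; simp [hab]
    · obtain ⟨rfl, -⟩ := h₂; simp
    · rw [List.head?_append_of_ne_nil _ (letterImage_ne_nil a b ε y), head?_letterImage]
      split_ifs <;> simp_all

lemma isReduced_letterImage (hab : a ≠ b) (x : α × Bool) : IsReduced (letterImage a b ε x) := by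
  unfold letterImage; split_ifs <;> simp [hab, hab.symm]

lemma head?_word_not_cancel (hab : a ≠ b) {c z : α × Bool} (t : List (α × Bool))
    (hcz : z ≠ (a, false) → c.1 = z.1 → c.2 = z.2) (haf : z = (a, false) → c.1 = b → c.2 = !ε)
    (hbe : z = (b, ε) → c.1 = a → c.2 = false) :
    ∀ q ∈ (word a b ε (z :: t)).head?, c.1 = q.1 → c.2 = q.2 := by
  obtain ⟨q, hq, hcases⟩ := head?_word ε hab z t
  rw [hq]
  rintro _ ⟨⟩
  rcases hcases with ⟨rfl, rfl⟩ | ⟨rfl, rfl⟩ | ⟨hz, rfl⟩ <;> simp_all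

lemma isReduced_word (hab : a ≠ b) {l : List (α × Bool)} (hl : IsReduced l) :
    IsReduced (word a b ε l) := by
  induction l using word.induct a b ε with
  | case1 => exact IsReduced.nil
  | case2 x => exact isReduced_letterImage ε hab x
  | case3 x y t h ih =>
    obtain ⟨rfl, rfl⟩ := h
    rw [word.eq_3, if_pos ⟨rfl, rfl⟩]
    rcases t with _ | ⟨z, t⟩
    · exact IsReduced.singleton
    obtain ⟨hyz, ht⟩ := isReduced_cons_cons.mp (isReduced_cons_cons.mp hl).2
    refine List.isChain_cons.mpr ⟨head?_word_not_cancel ε hab t ?_ ?_ ?_, ih ht⟩ <;>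
      simp_all [Prod.ext_iff]
  | case4 x y t h₁ h₂ ih =>
    obtain ⟨rfl, rfl⟩ := h₂
    rw [word.eq_3, if_neg h₁, if_pos ⟨rfl, rfl⟩]
    rcases t with _ | ⟨z, t⟩
    · exact IsReduced.singleton
    obtain ⟨hyz, ht⟩ := isReduced_cons_cons.mp (isReduced_cons_cons.mp hl).2
    refine List.isChain_cons.mpr ⟨head?_word_not_cancel ε hab t ?_ ?_ ?_, ih ht⟩ <;>
      simp_all [Prod.ext_iff]
  | case5 x y t h₁ h₂ ih =>
    obtain ⟨hxy, hyt⟩ := isReduced_cons_cons.mp hl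
    rw [word.eq_3, if_neg h₁, if_neg h₂]
    refine List.isChain_append.mpr ⟨isReduced_letterImage ε hab x, ih hyt, ?_⟩
    rw [getLast?_letterImage]
    rintro _ ⟨⟩
    refine head?_word_not_cancel ε hab t ?_ ?_ ?_ <;> cases ε <;> grind

lemma dropLast_word_prefix (hab : a ≠ b) (u v : List (α × Bool)) :
    (word a b ε u).dropLast <+: word a b ε (u ++ v) := by
  induction u using word.induct a b ε with
  | case1 => exact List.nil_prefix
  | case2 x =>
    rcases v with _ | ⟨y, t⟩
    · exact List.dropLast_prefix _
    rw [List.singleton_append, word, word.eq_3]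
    split_ifs with h₁ h₂
    · obtain ⟨rfl, -⟩ := h₁; simp [letterImage]
    · obtain ⟨rfl, -⟩ := h₂; simp [letterImage, hab.symm]
    · exact (List.dropLast_prefix _).trans (List.prefix_append _ _)
  | case3 x y t h ih =>
    rw [List.cons_append, List.cons_append, word.eq_3, if_pos h, word.eq_3, if_pos h]
    exact List.dropLast_cons_prefix_cons ih
  | case4 x y t h₁ h₂ ih =>
    rw [List.cons_append, List.cons_append, word.eq_3, if_neg h₁, if_pos h₂, word.eq_3, if_neg h₁,
      if_pos h₂]
    exact List.dropLast_cons_prefix_cons ih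
  | case5 x y t h₁ h₂ ih =>
    rw [List.cons_append, List.cons_append, word.eq_3, if_neg h₁, if_neg h₂, word.eq_3, if_neg h₁,
      if_neg h₂, List.dropLast_append_of_ne_nil (word_ne_nil a b ε (List.cons_ne_nil _ _)),
      ← List.cons_append]
    exact (List.prefix_append_right_inj _).mpr ih

lemma word_append_cons {y : α × Bool} (hy₁ : y ≠ (b, !ε)) (hy₂ : y ≠ (a, false))
    (u v : List (α × Bool)) : word a b ε (u ++ y :: v) = word a b ε u ++ word a b ε (y :: v) := by
  induction u using word.induct a b ε with
  | case1 => rfl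
  | case2 x => rw [List.singleton_append, word.eq_3, if_neg (by tauto), if_neg (by tauto)]; rfl
  | case3 x y t h ih =>
    rw [List.cons_append, List.cons_append, word.eq_3, if_pos h, word.eq_3, if_pos h, ih,
      List.cons_append]
  | case4 x y t h₁ h₂ ih =>
    rw [List.cons_append, List.cons_append, word.eq_3, if_neg h₁, if_pos h₂, word.eq_3, if_neg h₁,
      if_pos h₂, ih, List.cons_append]
  | case5 x y t h₁ h₂ ih =>
    rw [List.cons_append, List.cons_append, word.eq_3, if_neg h₁, if_neg h₂, word.eq_3, if_neg h₁,
      if_neg h₂, ← List.cons_append, ih, List.append_assoc]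

lemma red_flatMap_letterImage_word (hab : a ≠ b) (l : List (α × Bool)) :
    Red (l.flatMap (letterImage a b ε)) (word a b ε l) := by
  have hb : ∀ c, letterImage a b ε (b, c) = [(b, c)] := fun c => by
    simp [letterImage, hab.symm]
  induction l using word.induct a b ε with
  | case1 => exact Red.refl
  | case2 x => simpa [word] using Red.refl
  | case3 x y t h ih =>
    obtain ⟨rfl, rfl⟩ := h
    rw [word.eq_3, if_pos ⟨rfl, rfl⟩, List.flatMap_cons, List.flatMap_cons, hb]
    simpa [letterImage] using
      Red.trans (Red.Step.cons Red.Step.cons_not).to_red (Red.cons_cons ih)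
  | case4 x y t h₁ h₂ ih =>
    obtain ⟨rfl, rfl⟩ := h₂
    rw [word.eq_3, if_neg h₁, if_pos ⟨rfl, rfl⟩, List.flatMap_cons, List.flatMap_cons, hb]
    simpa [letterImage] using
      Red.trans (Red.Step.cons_not (x := b) (b := ε)).to_red (Red.cons_cons ih)
  | case5 x y t h₁ h₂ ih =>
    rw [word.eq_3, if_neg h₁, if_neg h₂, List.flatMap_cons]
    exact Red.append_append Red.refl ih

lemma map_mk_eq_mk_flatMap (e : FreeGroup α →* FreeGroup α)
    (ha : e (of a) = mk [(a, true), (b, ε)]) (hx : ∀ x, x ≠ a → e (of x) = of x)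
    (l : List (α × Bool)) : e (mk l) = mk (l.flatMap (letterImage a b ε)) := by
  have hletter : ∀ x, e (mk [x]) = mk (letterImage a b ε x) := by
    rintro ⟨z, c⟩
    have hinv : mk [(z, false)] = (of z)⁻¹ := by simp [of, inv_mk, invRev]
    by_cases hz : z = a
    · subst hz
      cases c
      · rw [hinv, _root_.map_inv, ha, inv_mk]; simp [letterImage, invRev]
      · simp only [letterImage]; exact ha
    · cases c
      · rw [hinv, _root_.map_inv, hx z hz, ← hinv]; simp [letterImage, hz]
      · simp only [letterImage, Prod.mk.injEq, hz, false_and, if_false]; exact hx z hz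
  induction l with
  | nil => exact map_one e
  | cons x l ih =>
    rw [List.flatMap_cons, ← mul_mk, ← hletter, ← ih, ← _root_.map_mul, mul_mk,
      List.singleton_append]

lemma toWord_map_mk (hab : a ≠ b) (e : FreeGroup α →* FreeGroup α)
    (ha : e (of a) = mk [(a, true), (b, ε)]) (hx : ∀ x, x ≠ a → e (of x) = of x)
    {l : List (α × Bool)} (hl : IsReduced l) : (e (mk l)).toWord = word a b ε l := by
  rw [map_mk_eq_mk_flatMap ε e ha hx, toWord_mk,
    reduce.eq_of_red (red_flatMap_letterImage_word ε hab l), (isReduced_word ε hab hl).reduce_eq]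

variable (a b) in
def hom : FreeGroup α →* FreeGroup α :=
  FreeGroup.lift fun x => if x = a then mk [(a, true), (b, ε)] else of x

lemma hom_of_self : hom a b ε (of a) = mk [(a, true), (b, ε)] := by simp [hom]

lemma hom_of_of_ne {x : α} (hx : x ≠ a) : hom a b ε (of x) = of x := by simp [hom, hx]

lemma hom_comp_hom_not (hab : a ≠ b) : (hom a b ε).comp (hom a b !ε) = MonoidHom.id _ := by
  refine ext_hom _ _ fun x => ?_
  rcases eq_or_ne x a with rfl | hx
  · rw [MonoidHom.comp_apply, hom_of_self, map_mk_eq_mk_flatMap ε _ (hom_of_self ε)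
      (fun _ => hom_of_of_ne ε)]
    exact Quot.sound (by simpa [letterImage, hab.symm] using Red.Step.not (L₁ := [(x, true)]))
  · simp [hom_of_of_ne _ hx]

lemma word_word_not (hab : a ≠ b) {l : List (α × Bool)} (hl : IsReduced l) :
    word a b ε (word a b (!ε) l) = l := by
  have hword : ∀ ε, ∀ {l : List (α × Bool)}, IsReduced l →
      (hom a b ε (mk l)).toWord = word a b ε l := fun ε _ =>
    toWord_map_mk ε hab _ (hom_of_self ε) (fun _ => hom_of_of_ne ε)
  rw [← hword _ hl, ← hword _ isReduced_toWord, mk_toWord, ← MonoidHom.comp_apply,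
    hom_comp_hom_not ε hab, MonoidHom.id_apply, toWord_mk, hl.reduce_eq]

end Nielsen

section Boundary

lemma length_pre (ξ : Bd α) (m : ℕ) : (pre ξ m).length = m := List.length_ofFn

lemma getElem_pre (ξ : Bd α) {m i : ℕ} (h : i < (pre ξ m).length) : (pre ξ m)[i] = ξ.1 i :=
  List.getElem_ofFn _

lemma ne_linv_iff {x y : α × Bool} : y ≠ linv x ↔ (x.1 = y.1 → x.2 = y.2) := by
  obtain ⟨x₁, x₂⟩ := x
  obtain ⟨y₁, y₂⟩ := y
  cases x₂ <;> cases y₂ <;> simp [linv, eq_comm]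

lemma isReduced_pre (ξ : Bd α) (m : ℕ) : IsReduced (pre ξ m) :=
  List.isChain_iff_getElem.mpr fun i hi => by
    simpa only [getElem_pre] using ne_linv_iff.mp (ξ.2 i)

lemma take_pre (ξ : Bd α) {k M : ℕ} (h : k ≤ M) : (pre ξ M).take k = pre ξ k := by
  apply List.ext_getElem <;> simp [pre, h]

lemma pre_prefix_pre (ξ : Bd α) {m M : ℕ} (h : m ≤ M) : pre ξ m <+: pre ξ M :=
  take_pre ξ h ▸ List.take_prefix _ _

lemma mem_cyl_iff_prefix_pre {ξ : Bd α} {c : List (α × Bool)} {m : ℕ} (hm : c.length ≤ m) :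
    ξ ∈ Cyl c ↔ c <+: pre ξ m := by
  rw [List.prefix_iff_getElem]
  simp only [Cyl, Set.mem_ofPred_eq, List.get_eq_getElem, getElem_pre, length_pre, hm,
    exists_true_left]
  exact forall₂_congr fun _ _ => eq_comm

lemma Bd.ext_pre {ξ η : Bd α} (h : ∀ k, pre ξ k = pre η k) : ξ = η :=
  Subtype.ext <| funext fun n => congrFun (List.ofFn_inj.mp (h (n + 1))) (Fin.last n)

end Boundary

def TendstoBd (f : List (α × Bool) → List (α × Bool)) (ξ η : Bd α) : Prop :=
  ∀ k, ∀ᶠ m in atTop, (f (pre ξ m)).take k = pre η k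

section Limits

variable {f g : List (α × Bool) → List (α × Bool)} {ξ η η' : Bd α}

lemma TendstoBd.unique (h : TendstoBd f ξ η) (h' : TendstoBd f ξ η') : η = η' :=
  Bd.ext_pre fun k => by
    obtain ⟨m, hm, hm'⟩ := ((h k).and (h' k)).exists
    rw [← hm, hm']

lemma TendstoBd.mem_cyl (h : TendstoBd f ξ η) {c : List (α × Bool)}
    (hc : ∀ᶠ m in atTop, c <+: f (pre ξ m)) : η ∈ Cyl c := by
  obtain ⟨m, hm, hcm⟩ := ((h c.length).and hc).exists
  rw [mem_cyl_iff_prefix_pre le_rfl, ← hm]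
  exact List.prefix_take_iff.mpr ⟨hcm, le_rfl⟩

lemma getElem_apply_pre_of_le (hf : ∀ u v, (f u).dropLast <+: f (u ++ v)) (ξ : Bd α)
    {m M i : ℕ} (hmM : m ≤ M) (hi : i + 1 < (f (pre ξ m)).length)
    (h : i < (f (pre ξ M)).length) : (f (pre ξ M))[i] = (f (pre ξ m))[i] := by
  obtain ⟨v, hv⟩ := pre_prefix_pre ξ hmM
  have hp := hf (pre ξ m) v
  rw [hv] at hp
  rw [← hp.getElem (by simp only [List.length_dropLast]; omega), List.getElem_dropLast]

lemma lt_length_apply_pre (hlen : ∀ l, l.length ≤ 2 * (f l).length) (ξ : Bd α) {k m : ℕ}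
    (hm : 2 * k + 2 ≤ m) : k < (f (pre ξ m)).length := by
  have := hlen (pre ξ m)
  rw [length_pre] at this
  omega

lemma exists_tendstoBd (hf : ∀ u v, (f u).dropLast <+: f (u ++ v))
    (hlen : ∀ l, l.length ≤ 2 * (f l).length) (hR : ∀ l, IsReduced l → IsReduced (f l))
    (ξ : Bd α) : ∃ η, TendstoBd f ξ η := by
  -- `f (ξ|_m)` has length at least `m / 2`, and only its last letter can change as `m` grows.
  let F n := (f (pre ξ (2 * n + 4)))[n]'(lt_length_apply_pre hlen ξ (by omega))
  have hF : ∀ {i M} (hM : 2 * i + 4 ≤ M),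
      (f (pre ξ M))[i]'(lt_length_apply_pre hlen ξ (by omega)) = F i := fun hM =>
    getElem_apply_pre_of_le hf ξ hM (lt_length_apply_pre hlen ξ le_rfl) _
  let η : Bd α := ⟨F, fun n => by
    rw [← hF (M := 2 * n + 6) (by omega), ← hF (M := 2 * n + 6) (by omega), ne_linv_iff]
    exact List.isChain_iff_getElem.mp (hR _ (isReduced_pre ξ _)) n
      (lt_length_apply_pre hlen ξ (by omega))⟩
  refine ⟨η, fun k => ?_⟩
  filter_upwards [eventually_ge_atTop (2 * k + 2)] with m hm
  apply List.ext_getElem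
  · simp [length_pre η k, (lt_length_apply_pre hlen ξ hm).le]
  · intro i hi _
    rw [List.getElem_take, getElem_pre]
    exact hF (by rw [List.length_take] at hi; omega)

lemma TendstoBd.of_leftInverse (hf : ∀ u v, (f u).dropLast <+: f (u ++ v))
    (hlen : ∀ l, l.length ≤ 2 * (f l).length) (hfg : ∀ l, IsReduced l → f (g l) = l)
    (h : TendstoBd g η ξ) : TendstoBd f ξ η := by
  intro k
  filter_upwards [eventually_ge_atTop (2 * k + 2)] with m hm
  obtain ⟨M, hM, hkM⟩ := ((h m).and (eventually_ge_atTop k)).exists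
  obtain ⟨s, hs⟩ : pre ξ m <+: g (pre η M) := hM ▸ List.take_prefix _ _
  have hprefix := hf (pre ξ m) s
  rw [hs, hfg _ (isReduced_pre η M)] at hprefix
  have hk := lt_length_apply_pre hlen ξ hm
  rw [← List.take_eq_take_of_dropLast_prefix hprefix hk, take_pre η hkM]

end Limits

lemma ExtendsBd.tendstoBd [DecidableEq α] {φ : FreeGroup α ≃* FreeGroup α} {Φ : Bd α → Bd α}
    (hΦ : ExtendsBd φ Φ) {f : List (α × Bool) → List (α × Bool)}
    (hφ : ∀ {l}, IsReduced l → (φ (mk l)).toWord = f l) (ξ : Bd α) : TendstoBd f ξ (Φ ξ) :=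
  fun k => eventually_atTop.mpr <| (hΦ ξ k).imp fun _ hn m hm => hφ (isReduced_pre ξ m) ▸ hn m hm

namespace Nielsen

variable [DecidableEq α] {a b : α} (ε : Bool)

lemma isReduced_word_append_self (hab : a ≠ b) {u : List (α × Bool)}
    (hu : IsReduced (u ++ [(a, true)])) : IsReduced (word a b ε u ++ [(a, true)]) := by
  have h := isReduced_word ε hab hu
  rw [word_append_cons ε (by simp [hab]) (by simp)] at h
  exact h.infix (List.prefix_append_right_inj _ |>.mpr (by simp [word, letterImage])).isInfix

lemma prefix_word_pre (hab : a ≠ b) {u : List (α × Bool)} {ξ : Bd α}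
    (hξ : ξ ∈ Cyl (u ++ [(a, true)])) :
    ∀ᶠ m in atTop, word a b ε u ++ [(a, true)] <+: word a b ε (pre ξ m) := by
  filter_upwards [eventually_ge_atTop (u ++ [(a, true)]).length] with m hm
  obtain ⟨v, hv⟩ := (mem_cyl_iff_prefix_pre hm).mp hξ
  obtain ⟨z, hz, hcases⟩ := head?_word ε hab (a, true) v
  obtain ⟨t, ht⟩ := List.head?_eq_some_iff.mp hz
  rw [← hv, List.append_assoc, List.singleton_append, word_append_cons ε (by simp [hab]) (by simp),
    ht]
  rcases hcases with ⟨h, -⟩ | ⟨h, -⟩ | ⟨-, rfl⟩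
  · simp at h
  · simp [hab] at h
  · simp

end Nielsen

open Nielsen in
theorem stmt0_general [DecidableEq α] (a b : α) (hab : a ≠ b)
    (φ : FreeGroup α ≃* FreeGroup α)
    (hφa : φ (FreeGroup.of a) = FreeGroup.of a * FreeGroup.of b)
    (hφ : ∀ x : α, x ≠ a → φ (FreeGroup.of x) = FreeGroup.of x)
    (Φ : Bd α → Bd α) (hΦ : ExtendsBd φ Φ)
    (w : FreeGroup α)
    (hred : (w * FreeGroup.of a).toWord = w.toWord ++ [(a, true)]) :
    Φ '' Cyl ((w * FreeGroup.of a).toWord) = Cyl ((φ w * FreeGroup.of a).toWord) := by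
  have hφword : ∀ {l}, IsReduced l → (φ (mk l)).toWord = word a b true l :=
    toWord_map_mk true hab φ.toMonoidHom hφa hφ
  have hΦlim := hΦ.tendstoBd hφword
  have hw : IsReduced (w.toWord ++ [(a, true)]) := hred ▸ isReduced_toWord
  have hφw : (φ w * of a).toWord = word a b true w.toWord ++ [(a, true)] := by
    rw [← (isReduced_word_append_self true hab hw).reduce_eq, ← toWord_mk, ← mul_mk,
      ← hφword isReduced_toWord, mk_toWord, mk_toWord]
    rfl
  rw [hred, hφw]
  ext η
  constructor
  · rintro ⟨ξ, hξ, rfl⟩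
    exact (hΦlim ξ).mem_cyl (prefix_word_pre true hab hξ)
  · intro hη
    obtain ⟨ξ, hξ⟩ := exists_tendstoBd (dropLast_word_prefix false hab)
      (length_le_two_mul_length_word a b false) (fun _ => isReduced_word false hab) η
    refine ⟨ξ, hξ.mem_cyl ?_, (hΦlim ξ).unique ?_⟩
    · have hww : word a b false (word a b true w.toWord) = w.toWord :=
        word_word_not false hab isReduced_toWord
      simpa only [hww] using prefix_word_pre false hab hη
    · exact hξ.of_leftInverse (dropLast_word_prefix true hab)
        (length_le_two_mul_length_word a b true) (fun _ => word_word_not true hab)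

/-- Nielsen automorphism `a ↦ ab`: image of the cylinder `C¹_{w·a}` is `C¹_{φ(w)·a}`. -/
theorem stmt0 [DecidableEq α] [Nontrivial α] (a b : α) (hab : a ≠ b)
    (φ : FreeGroup α ≃* FreeGroup α)
    (hφa : φ (FreeGroup.of a) = FreeGroup.of a * FreeGroup.of b)
    (hφ : ∀ x : α, x ≠ a → φ (FreeGroup.of x) = FreeGroup.of x)
    (Φ : Bd α → Bd α) (hΦ : ExtendsBd φ Φ)
    (w : FreeGroup α)
    (hred : (w * FreeGroup.of a).toWord = w.toWord ++ [(a, true)]) :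
    Φ '' Cyl ((w * FreeGroup.of a).toWord) = Cyl ((φ w * FreeGroup.of a).toWord) :=
  stmt0_general a b hab φ hφa hφ Φ hΦ w hred
end

section
/- Let U be a finite set of reduced words in F(A) with |A| ≥ 2. Then there exists a unique reduced subset U_min ⊆ F(A) of minimal cardinality such that the multi-cylinder C¹_{U_min} = ⋃_{u ∈ U_min} C¹_u equals C¹_U = ⋃_{u ∈ U} C¹_u. Here 'reduced subset' means: no element of U_min is a prefix of another element of U_min, and no subfamily of cylinders in the union can be replaced by a single strictly larger cylinder keeping the union equal. -/
open FreeGroup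

variable {α : Type*}

/-!
In a cover `V` of `C = C¹_U` of minimal cardinality, if a cylinder `C¹_g` with `C¹_g ⊆ C`
contains the cylinders of several members of `V`, these members can be traded for `g`; hence
there is at most one of them. Two consequences: no cylinder of a member lies in that of another,
and no proper prefix `l` of a member `u` has `C¹_l ⊆ C`, for otherwise the members extending `l`
would cover `C¹_l` on their own, which takes at least two of them since `|A| ≥ 2`. So the members
of a minimal cover are exactly the words whose cylinder is a maximal cylinder inside `C`, and
this description does not depend on the cover.
-/

theorem linv_ne_self (x : α × Bool) : linv x ≠ x := by
  simp [linv, Prod.ext_iff]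

theorem ne_linv_iff_s8 {a b : α × Bool} : b ≠ linv a ↔ (a.1 = b.1 → a.2 = b.2) := by
  obtain ⟨a₁, a₂⟩ := a
  obtain ⟨b₁, b₂⟩ := b
  cases a₂ <;> cases b₂ <;> simp [linv, eq_comm]

theorem exists_ne_ne [Nontrivial α] (x z : α × Bool) : ∃ y, y ≠ x ∧ y ≠ z := by
  obtain ⟨c, hc⟩ := exists_ne x.1
  have hcx : ∀ b, (c, b) ≠ x := fun b e => hc (congrArg Prod.fst e)
  by_cases h : ((c, true) : α × Bool) = z
  · exact ⟨(c, false), hcx false, fun e => by simp [← h] at e⟩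
  · exact ⟨(c, true), hcx true, h⟩

theorem cyl_subset_cyl_of_prefix {v w : List (α × Bool)} (h : v <+: w) : Cyl w ⊆ Cyl v :=
  fun ξ hξ i hi => (hξ i (by have := h.length_le; omega)).trans (h.getElem hi).symm

theorem prefix_or_prefix_of_mem_cyl {ξ : Bd α} {v w : List (α × Bool)} (hv : ξ ∈ Cyl v)
    (hw : ξ ∈ Cyl w) : v <+: w ∨ w <+: v := by
  have key : ∀ {v w : List (α × Bool)}, ξ ∈ Cyl v → ξ ∈ Cyl w → v.length ≤ w.length → v <+: w :=
    fun hv hw hle => List.prefix_iff_getElem.2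
      ⟨hle, fun i hi => (hv i hi).symm.trans (hw i (by omega))⟩
  rcases le_total v.length w.length with h | h
  exacts [.inl (key hv hw h), .inr (key hw hv h)]

/-- The witness is `w` followed by a constant tail `y y y …` with `y ≠ z`. -/
theorem exists_mem_cyl_ne [Nontrivial α] {w : List (α × Bool)} (hw : IsReduced w)
    (z : α × Bool) : ∃ ξ ∈ Cyl w, ξ.1 w.length ≠ z := by
  obtain ⟨y, hy_last, hy_z⟩ := exists_ne_ne (linv (w.getLastD z)) z
  let ξ : Bd α := ⟨fun n => w.getD n y, fun n => by
    show w.getD (n + 1) y ≠ linv (w.getD n y)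
    rcases lt_trichotomy (n + 1) w.length with h | h | h
    · rw [w.getD_eq_getElem y h, w.getD_eq_getElem y (by omega), ne_linv_iff_s8]
      exact List.isChain_iff_getElem.1 hw n h
    · rw [w.getD_eq_default y h.ge, w.getD_eq_getElem y (by omega)]
      simpa [List.getLastD_eq_getLast?, List.getLast?_eq_getElem?, ← h] using hy_last
    · rw [w.getD_eq_default y (by omega), w.getD_eq_default y (by omega)]
      exact (linv_ne_self y).symm⟩
  exact ⟨ξ, fun i hi => w.getD_eq_getElem y hi, by simpa [ξ] using hy_z⟩

theorem cyl_nonempty [Nontrivial α] {w : List (α × Bool)} (hw : IsReduced w) :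
    (Cyl w).Nonempty :=
  let ⟨ξ, hξ, _⟩ := exists_mem_cyl_ne hw (Classical.arbitrary _)
  ⟨ξ, hξ⟩

theorem not_cyl_subset_cyl_of_prefix [Nontrivial α] {l w : List (α × Bool)} (hw : IsReduced w)
    (hl : l <+: w) (hne : l ≠ w) : ¬ Cyl l ⊆ Cyl w := by
  intro h
  have hlen : l.length < w.length := lt_of_le_of_ne hl.length_le (mt hl.eq_of_length hne)
  obtain ⟨ξ, hξ, hξne⟩ := exists_mem_cyl_ne (hw.infix hl.isInfix) w[l.length]
  exact hξne (h hξ l.length hlen)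

def IsMaxCyl (C : Set (Bd α)) (w : List (α × Bool)) : Prop :=
  Cyl w ⊆ C ∧ ∀ l, l <+: w → l ≠ w → ¬ Cyl l ⊆ C

section MultiCyl

variable [DecidableEq α]

def multiCyl (V : Finset (FreeGroup α)) : Set (Bd α) := ⋃ u ∈ V, Cyl u.toWord

theorem mem_multiCyl {V : Finset (FreeGroup α)} {ξ : Bd α} :
    ξ ∈ multiCyl V ↔ ∃ u ∈ V, ξ ∈ Cyl u.toWord := by
  simp [multiCyl]

theorem cyl_subset_multiCyl {V : Finset (FreeGroup α)} {u : FreeGroup α} (hu : u ∈ V) :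
    Cyl u.toWord ⊆ multiCyl V :=
  Set.subset_biUnion_of_mem (u := fun u : FreeGroup α => Cyl u.toWord) hu

theorem multiCyl_subset_iff {V : Finset (FreeGroup α)} {S : Set (Bd α)} :
    multiCyl V ⊆ S ↔ ∀ u ∈ V, Cyl u.toWord ⊆ S :=
  Set.iUnion₂_subset_iff

def IsMinCover (C : Set (Bd α)) (V : Finset (FreeGroup α)) : Prop :=
  multiCyl V = C ∧ ∀ W, multiCyl W = C → V.card ≤ W.card

theorem exists_isMinCover (U : Finset (FreeGroup α)) : ∃ V, IsMinCover (multiCyl U) V := by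
  obtain ⟨V, hV, hmin⟩ :=
    (measure Finset.card).wf.has_min {V | multiCyl V = multiCyl U} ⟨U, rfl⟩
  exact ⟨V, hV, fun W hW => not_lt.1 (hmin W hW)⟩

namespace IsMinCover

variable {C : Set (Bd α)} {V : Finset (FreeGroup α)}

theorem cyl_subset (hV : IsMinCover C V) {u : FreeGroup α} (hu : u ∈ V) : Cyl u.toWord ⊆ C :=
  hV.1 ▸ cyl_subset_multiCyl hu

theorem card_le_one_of_multiCyl_subset (hV : IsMinCover C V) {T : Finset (FreeGroup α)}
    (hT : T ⊆ V) {g : FreeGroup α} (hTg : multiCyl T ⊆ Cyl g.toWord) (hgC : Cyl g.toWord ⊆ C) :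
    T.card ≤ 1 := by
  have hcover : multiCyl (insert g (V \ T)) = C := by
    apply subset_antisymm
    · refine multiCyl_subset_iff.2 fun u hu => ?_
      rcases Finset.mem_insert.1 hu with rfl | hu
      · exact hgC
      · exact hV.cyl_subset (Finset.mem_sdiff.1 hu).1
    · refine hV.1 ▸ multiCyl_subset_iff.2 fun u hu => ?_
      by_cases huT : u ∈ T
      · exact (cyl_subset_multiCyl huT).trans
          (hTg.trans (cyl_subset_multiCyl (Finset.mem_insert_self _ _)))
      · exact cyl_subset_multiCyl (Finset.mem_insert_of_mem (Finset.mem_sdiff.2 ⟨hu, huT⟩))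
  have := hV.2 _ hcover
  have := Finset.card_insert_le g (V \ T)
  have := Finset.card_sdiff_add_card_eq_card hT
  omega

theorem not_cyl_subset_cyl (hV : IsMinCover C V) {u v : FreeGroup α} (hu : u ∈ V) (hv : v ∈ V)
    (hne : u ≠ v) : ¬ Cyl u.toWord ⊆ Cyl v.toWord := by
  intro h
  have := hV.card_le_one_of_multiCyl_subset (T := {u, v})
    (Finset.insert_subset hu (Finset.singleton_subset_iff.2 hv))
    (by simp [multiCyl_subset_iff, h]) (hV.cyl_subset hv)
  rw [Finset.card_pair hne] at this
  omega

theorem not_cyl_subset_of_prefix [Nontrivial α] (hV : IsMinCover C V) {u : FreeGroup α}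
    (hu : u ∈ V) {l : List (α × Bool)} (hl : l <+: u.toWord) (hne : l ≠ u.toWord) :
    ¬ Cyl l ⊆ C := by
  intro hlC
  set T := V.filter (fun v => l <+: v.toWord)
  have hTl : multiCyl T ⊆ Cyl l :=
    multiCyl_subset_iff.2 fun v hv => cyl_subset_cyl_of_prefix (Finset.mem_filter.1 hv).2
  have hlT : Cyl l ⊆ multiCyl T := by
    intro ξ hξ
    obtain ⟨v, hv, hξv⟩ := mem_multiCyl.1 (hV.1 ▸ hlC hξ)
    rcases prefix_or_prefix_of_mem_cyl hξ hξv with hlv | hvl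
    · exact cyl_subset_multiCyl (Finset.mem_filter.2 ⟨hv, hlv⟩) hξv
    · obtain rfl : u = v := by_contra fun huv => hV.not_cyl_subset_cyl hu hv huv
        ((cyl_subset_cyl_of_prefix hl).trans (cyl_subset_cyl_of_prefix hvl))
      exact absurd (hl.eq_of_length (le_antisymm hl.length_le hvl.length_le)) hne
  have hword : (mk l).toWord = l := by
    rw [toWord_mk, (isReduced_toWord.infix hl.isInfix).reduce_eq]
  have hT : T.card ≤ 1 := hV.card_le_one_of_multiCyl_subset (Finset.filter_subset _ _)
    (by rwa [hword]) (by rwa [hword])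
  have hTu : multiCyl T ⊆ Cyl u.toWord := multiCyl_subset_iff.2 fun v hv => by
    rw [Finset.card_le_one.1 hT v hv u (Finset.mem_filter.2 ⟨hu, hl⟩)]
  exact not_cyl_subset_cyl_of_prefix isReduced_toWord hl hne (hlT.trans hTu)

theorem mem_iff [Nontrivial α] (hV : IsMinCover C V) {v : FreeGroup α} :
    v ∈ V ↔ IsMaxCyl C v.toWord := by
  refine ⟨fun hv => ⟨hV.cyl_subset hv, fun _ => hV.not_cyl_subset_of_prefix hv⟩, fun hv => ?_⟩
  obtain ⟨ξ, hξ⟩ := cyl_nonempty (isReduced_toWord (x := v))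
  obtain ⟨u, hu, hξu⟩ := mem_multiCyl.1 (hV.1 ▸ hv.1 hξ)
  suffices u.toWord = v.toWord from toWord_injective this ▸ hu
  by_contra hne
  rcases prefix_or_prefix_of_mem_cyl hξu hξ with huv | hvu
  · exact hv.2 _ huv hne (hV.cyl_subset hu)
  · exact hV.not_cyl_subset_of_prefix hu hvu (Ne.symm hne) hv.1

theorem unique [Nontrivial α] {W : Finset (FreeGroup α)} (hV : IsMinCover C V)
    (hW : IsMinCover C W) : V = W :=
  Finset.ext fun _ => by rw [hV.mem_iff, hW.mem_iff]

end IsMinCover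

end MultiCyl

theorem stmt8_general [DecidableEq α] [Nontrivial α] (U : Finset (FreeGroup α)) :
    ∃! V : Finset (FreeGroup α),
      (⋃ u ∈ V, Cyl u.toWord) = (⋃ u ∈ U, Cyl u.toWord) ∧
      ∀ W : Finset (FreeGroup α),
        (⋃ u ∈ W, Cyl u.toWord) = (⋃ u ∈ U, Cyl u.toWord) → V.card ≤ W.card := by
  obtain ⟨V, hV⟩ := exists_isMinCover U
  exact ⟨V, hV, fun W (hW : IsMinCover _ W) => hW.unique hV⟩

/-- Every multi-cylinder `C¹_U` is defined by a unique set of reduced words of minimal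
cardinality. -/
theorem stmt8 [DecidableEq α] [Fintype α] [Nontrivial α] (U : Finset (FreeGroup α)) :
    ∃! V : Finset (FreeGroup α),
      (⋃ u ∈ V, Cyl u.toWord) = (⋃ u ∈ U, Cyl u.toWord) ∧
      ∀ W : Finset (FreeGroup α),
        (⋃ u ∈ W, Cyl u.toWord) = (⋃ u ∈ U, Cyl u.toWord) → V.card ≤ W.card :=
  stmt8_general U
end

section
/- Let φ be an automorphism of F(A) and let S(φ) be the maximum word length of φ(x) and φ⁻¹(x) over all x ∈ A. Then for any reduced word u ∈ F(A), the image φ(C¹_u) of the cylinder C¹_u equals the multi-cylinder C¹_U, where U = { φ(u')|_{S(φ)²} : u' ∈ u|^k } with k = S(φ)⁴ + S(φ)³ + S(φ)², w|_l denotes w with its last l letters erased, and w|^l denotes the set of all reduced words obtained from w by appending l letters. -/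
/-!
Everything rests on Cooper's bounded cancellation: if the reduced word of `x` is a prefix of
that of `y`, then `φ y` begins with `φ x` minus its last `S²` letters. Pull the geodesic from
`1` to `φ y` back along `φ⁻¹`: this is a path from `1` to `y` with steps of length at most `S`,
and in the tree it has to pass within `S` of `x` when it enters the subtree below `x`. Hence
`φ x` lies within `S²` of that geodesic.

Applied to prefixes of `ξ ∈ C¹_u`, it shows that `Φ ξ` begins with `φ(ξ|_n)` minus `S²`
letters, which gives `⊆`. For `⊇`, bounded cancellation for `φ⁻¹` makes the words `φ⁻¹(η|_m)`
minus `S²` letters pairwise prefix-comparable and unbounded, so they spell out some `ξ`. Using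
bounded cancellation once more gives `Φ ξ = η`, and `ξ` begins with `u` because
`|φ⁻¹(φ(u')|_{S²})| ≥ |u'| - S³`.
-/

open FreeGroup

variable {α : Type*}

namespace List

theorem exists_common_prefix {β : Type*} :
    ∀ l₁ l₂ : List β, ∃ p r₁ r₂, l₁ = p ++ r₁ ∧ l₂ = p ++ r₂ ∧
      ∀ a ∈ r₁.head?, ∀ b ∈ r₂.head?, a ≠ b
  | [], l₂ => ⟨[], [], l₂, rfl, rfl, by simp⟩
  | l₁, [] => ⟨[], l₁, [], rfl, rfl, by simp⟩
  | a :: l₁, b :: l₂ => by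
    by_cases hab : a = b
    · obtain ⟨p, r₁, r₂, rfl, rfl, hr⟩ := exists_common_prefix l₁ l₂
      exact ⟨a :: p, r₁, r₂, rfl, by rw [hab]; rfl, hr⟩
    · exact ⟨[], a :: l₁, b :: l₂, rfl, rfl, by simpa using hab⟩

end List

namespace FreeGroup

theorem mk_append_inv_mul_mk_append (p a b : List (α × Bool)) :
    (mk (p ++ a))⁻¹ * mk (p ++ b) = (mk a)⁻¹ * mk b := by
  simp only [← mul_mk, mul_inv_rev, mul_assoc, inv_mul_cancel_left]

section Geometry

variable [DecidableEq α]

theorem toWord_mk_of_isReduced {L : List (α × Bool)} (h : IsReduced L) :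
    (mk L).toWord = L := by
  rw [toWord_mk, h.reduce_eq]

theorem isReduced_invRev {L : List (α × Bool)} (h : IsReduced L) : IsReduced (invRev L) := by
  have := isReduced_toWord (x := (mk L)⁻¹)
  rwa [toWord_inv, toWord_mk_of_isReduced h] at this

theorem isReduced_invRev_append {r s : List (α × Bool)} (hr : IsReduced r) (hs : IsReduced s)
    (hrs : ∀ a ∈ r.head?, ∀ b ∈ s.head?, a ≠ b) : IsReduced (invRev r ++ s) := by
  refine List.isChain_append.mpr ⟨isReduced_invRev hr, hs, ?_⟩
  cases r with
  | nil => simp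
  | cons a r =>
    intro x hx b hb hab
    simp only [invRev, List.map_cons, List.reverse_cons, List.getLast?_concat,
      Option.mem_def, Option.some.injEq] at hx
    subst hx
    have := hrs a rfl b hb
    obtain ⟨a₁, a₂⟩ := a
    obtain ⟨b₁, b₂⟩ := b
    cases a₂ <;> cases b₂ <;> simp_all

theorem exists_common_prefix_toWord (x y : FreeGroup α) :
    ∃ p r s, x.toWord = p ++ r ∧ y.toWord = p ++ s ∧
      (x⁻¹ * y).norm = r.length + s.length := by
  obtain ⟨p, r, s, hx, hy, hrs⟩ := List.exists_common_prefix x.toWord y.toWord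
  have hr : IsReduced r := isReduced_toWord.infix ⟨p, [], by rw [hx, List.append_nil]⟩
  have hs : IsReduced s := isReduced_toWord.infix ⟨p, [], by rw [hy, List.append_nil]⟩
  have hxy : x⁻¹ * y = mk (invRev r ++ s) := by
    rw [← mk_toWord (x := x), ← mk_toWord (x := y), hx, hy, mk_append_inv_mul_mk_append, inv_mk,
      mul_mk]
  refine ⟨p, r, s, hx, hy, ?_⟩
  rw [hxy, norm, toWord_mk_of_isReduced (isReduced_invRev_append hr hs hrs), List.length_append,
    invRev_length]

theorem norm_inv_mul_le_of_not_prefix {u x y : FreeGroup α} (hux : ¬u.toWord <+: x.toWord)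
    (huy : u.toWord <+: y.toWord) : (u⁻¹ * x).norm ≤ (x⁻¹ * y).norm := by
  obtain ⟨p, r, s, hx, hy, hxy⟩ := exists_common_prefix_toWord x y
  obtain ⟨t, hu⟩ : p <+: u.toWord := by
    refine (List.prefix_or_prefix_of_prefix (hy ▸ List.prefix_append p s) huy).resolve_right ?_
    exact fun hup => hux (hup.trans (hx ▸ List.prefix_append p r))
  have hts : t <+: s := (List.prefix_append_right_inj p).mp (hu ▸ hy ▸ huy)
  have hux' : u⁻¹ * x = (mk t)⁻¹ * mk r := by
    rw [← mk_toWord (x := u), ← mk_toWord (x := x), ← hu, hx, mk_append_inv_mul_mk_append]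
  calc (u⁻¹ * x).norm ≤ (mk t)⁻¹.norm + (mk r).norm := hux' ▸ norm_mul_le _ _
    _ ≤ t.length + r.length := by rw [norm_inv_eq]; exact add_le_add norm_mk_le norm_mk_le
    _ ≤ (x⁻¹ * y).norm := by rw [hxy]; have := hts.length_le; omega

theorem rdrop_toWord_prefix_of_norm_le {x z : FreeGroup α} {w : List (α × Bool)} {n : ℕ}
    (hxz : (x⁻¹ * z).norm ≤ n) (hz : z.toWord <+: w) : x.toWord.rdrop n <+: w := by
  obtain ⟨p, r, s, hx, hz', hd⟩ := exists_common_prefix_toWord x z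
  have hxp : x.toWord.rdrop n <+: p := by
    rw [List.rdrop, hx, List.take_append_of_le_length (by simp only [List.length_append]; omega)]
    exact List.take_prefix _ _
  exact hxp.trans ((hz' ▸ List.prefix_append p s).trans hz)

theorem norm_map_le {β F : Type*} [DecidableEq β] [FunLike F (FreeGroup α) (FreeGroup β)]
    [MonoidHomClass F (FreeGroup α) (FreeGroup β)] {ψ : F} {S : ℕ}
    (hψ : ∀ a, (ψ (of a)).norm ≤ S) (g : FreeGroup α) : (ψ g).norm ≤ S * g.norm := by
  suffices ∀ L : List (α × Bool), (ψ (mk L)).norm ≤ S * L.length by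
    have := this g.toWord
    rwa [mk_toWord] at this
  intro L
  induction L with
  | nil => rw [show mk ([] : List (α × Bool)) = 1 from rfl, _root_.map_one]; rfl
  | cons a L ih =>
    have ha : (ψ (mk [a])).norm ≤ S := by
      obtain ⟨a, _ | _⟩ := a
      · have : mk [(a, false)] = (of a)⁻¹ := by simp [of, inv_mk, invRev]
        rw [this, _root_.map_inv, norm_inv_eq]
        exact hψ a
      · exact hψ a
    calc (ψ (mk (a :: L))).norm = (ψ (mk [a]) * ψ (mk L)).norm := by
          rw [← _root_.map_mul, mul_mk]; rfl
      _ ≤ S + S * L.length := (norm_mul_le _ _).trans (add_le_add ha ih)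
      _ = S * (a :: L).length := by simp only [List.length_cons]; ring

theorem toWord_mk_take_toWord (g : FreeGroup α) (j : ℕ) :
    (mk (g.toWord.take j)).toWord = g.toWord.take j :=
  toWord_mk_of_isReduced (isReduced_toWord.infix (List.take_prefix j _).isInfix)

theorem bounded_cancellation {β : Type*} [DecidableEq β] {ψ : FreeGroup α ≃* FreeGroup β}
    {S T : ℕ} (hS : ∀ a, (ψ (of a)).norm ≤ S) (hT : ∀ b, (ψ.symm (of b)).norm ≤ T)
    {x y : FreeGroup α} (hxy : x.toWord <+: y.toWord) :
    (ψ x).toWord.rdrop (S * T) <+: (ψ y).toWord := by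
  rcases eq_or_ne x 1 with rfl | hx
  · simp
  set w := (ψ y).toWord
  let p : ℕ → FreeGroup α := fun j => ψ.symm (mk (w.take j))
  have hp0 : ¬x.toWord <+: (p 0).toWord := by
    simpa [p, ← one_eq_mk] using hx
  have hpw : x.toWord <+: (p w.length).toWord := by simpa [p, w, mk_toWord] using hxy
  obtain ⟨j, hj, hj1⟩ := Nat.exists_not_and_succ_of_not_zero_of_exists (p := fun j =>
    x.toWord <+: (p j).toWord) hp0 ⟨_, hpw⟩
  have hstep : ((p j)⁻¹ * p (j + 1)).norm ≤ T := by
    have : (p j)⁻¹ * p (j + 1) = ψ.symm (mk ((w.drop j).take 1)) := by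
      simp only [p, List.take_add, ← _root_.map_inv, ← _root_.map_mul, ← mul_mk,
        inv_mul_cancel_left]
    calc ((p j)⁻¹ * p (j + 1)).norm ≤ T * (mk ((w.drop j).take 1)).norm :=
          this ▸ norm_map_le hT _
      _ ≤ T * 1 := Nat.mul_le_mul_left _ (norm_mk_le.trans (by simp))
      _ = T := mul_one T
  have hnear : ((ψ x)⁻¹ * mk (w.take j)).norm ≤ S * T :=
    calc ((ψ x)⁻¹ * mk (w.take j)).norm = (ψ (x⁻¹ * p j)).norm := by simp [p]
      _ ≤ S * (x⁻¹ * p j).norm := norm_map_le hS _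
      _ ≤ S * T := Nat.mul_le_mul_left _ ((norm_inv_mul_le_of_not_prefix hj hj1).trans hstep)
  exact rdrop_toWord_prefix_of_norm_le hnear
    ((toWord_mk_take_toWord (ψ y) j).symm ▸ List.take_prefix j w)

end Geometry

end FreeGroup

namespace Bd

theorem ne_linv_iff {a b : α × Bool} : b ≠ linv a ↔ (a.1 = b.1 → a.2 = b.2) := by
  obtain ⟨a₁, a₂⟩ := a
  obtain ⟨b₁, b₂⟩ := b
  cases a₂ <;> cases b₂ <;> simp [linv, eq_comm]

@[simp]
theorem length_pre (ξ : Bd α) (m : ℕ) : (pre ξ m).length = m :=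
  List.length_ofFn

@[simp]
theorem getElem_pre (ξ : Bd α) {m i : ℕ} (h : i < (pre ξ m).length) :
    (pre ξ m)[i] = ξ.1 i := by
  simp [pre]

theorem isReduced_pre (ξ : Bd α) (m : ℕ) : IsReduced (pre ξ m) :=
  List.isChain_iff_getElem.mpr fun i _ => ne_linv_iff.mp (by simpa using ξ.2 i)

theorem pre_prefix_pre (ξ : Bd α) {m n : ℕ} (h : m ≤ n) : pre ξ m <+: pre ξ n :=
  List.prefix_iff_eq_take.mpr <|
    List.ext_getElem (by simp only [length_pre, List.length_take]; omega) fun i _ _ => by simp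

theorem mem_cyl_pre (ξ : Bd α) (m : ℕ) : ξ ∈ Cyl (pre ξ m) :=
  fun i _ => by simp

theorem cyl_subset_cyl_of_prefix {v w : List (α × Bool)} (h : v <+: w) : Cyl w ⊆ Cyl v :=
  fun ξ hξ i hi => by simpa [h.getElem hi] using hξ i (hi.trans_le h.length_le)

theorem pre_length_of_mem_cyl {ξ : Bd α} {w : List (α × Bool)} (h : ξ ∈ Cyl w) :
    pre ξ w.length = w :=
  List.ext_getElem (by simp) fun i _ hi => by simpa using h i hi

theorem prefix_pre_of_mem_cyl {ξ : Bd α} {w : List (α × Bool)} {n : ℕ} (h : ξ ∈ Cyl w)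
    (hn : w.length ≤ n) : w <+: pre ξ n :=
  pre_length_of_mem_cyl h ▸ pre_prefix_pre ξ hn

theorem pre_prefix_of_mem_cyl {ξ : Bd α} {w : List (α × Bool)} {n : ℕ} (h : ξ ∈ Cyl w)
    (hn : n ≤ w.length) : pre ξ n <+: w :=
  pre_length_of_mem_cyl h ▸ pre_prefix_pre ξ hn

theorem eq_of_forall_exists_mem_cyl {ξ η : Bd α}
    (h : ∀ k, ∃ w : List (α × Bool), k < w.length ∧ ξ ∈ Cyl w ∧ η ∈ Cyl w) :
    ξ = η := by
  refine Subtype.ext (funext fun k => ?_)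
  obtain ⟨w, hk, hξ, hη⟩ := h k
  rw [hξ k hk, hη k hk]

theorem exists_forall_mem_cyl {P : ℕ → List (α × Bool)} (hred : ∀ m, IsReduced (P m))
    (hcomp : ∀ m m', P m <+: P m' ∨ P m' <+: P m) (hlen : ∀ n, ∃ m, n < (P m).length) :
    ∃ ξ : Bd α, ∀ m, ξ ∈ Cyl (P m) := by
  choose M hM using hlen
  have agree : ∀ m i (h : i < (P m).length), (P m)[i] = (P (M i))[i]'(hM i) := fun m i h =>
    (hcomp m (M i)).elim (fun h' => h'.getElem h) (fun h' => (h'.getElem (hM i)).symm)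
  refine ⟨⟨fun i => (P (M i))[i]'(hM i), fun n => ?_⟩, fun m i hi => (agree m i hi).symm⟩
  show (P (M (n + 1)))[n + 1]'(hM _) ≠ linv ((P (M n))[n]'(hM n))
  rw [← agree (M (n + 1)) n (by have := hM (n + 1); omega), ← agree (M (n + 1)) (n + 1) (hM _)]
  exact ne_linv_iff.mpr (List.isChain_iff_getElem.mp (hred _) n (hM _))

section Automorphism

variable [DecidableEq α] {φ : FreeGroup α ≃* FreeGroup α} {S T : ℕ}

theorem toWord_mk_pre (ξ : Bd α) (m : ℕ) : (mk (pre ξ m)).toWord = pre ξ m :=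
  toWord_mk_of_isReduced (isReduced_pre ξ m)

theorem exists_le_norm_map_mk_pre (hT : ∀ a, (φ.symm (of a)).norm ≤ T) (ξ : Bd α) (k : ℕ) :
    ∃ n, k ≤ (φ (mk (pre ξ n))).norm := by
  refine ⟨T * k + k, ?_⟩
  have := norm_map_le hT (φ (mk (pre ξ (T * k + k))))
  rw [MulEquiv.symm_apply_apply, FreeGroup.norm, toWord_mk_pre, length_pre] at this
  by_contra! h
  nlinarith

theorem mem_cyl_rdrop_of_extendsBd
    (hS : ∀ a, (φ (of a)).norm ≤ S) (hT : ∀ a, (φ.symm (of a)).norm ≤ T)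
    {Φ : Bd α → Bd α} (hΦ : ExtendsBd φ Φ) (ξ : Bd α) (n : ℕ) :
    Φ ξ ∈ Cyl ((φ (mk (pre ξ n))).toWord.rdrop (S * T)) := by
  set V := (φ (mk (pre ξ n))).toWord
  obtain ⟨m₀, hm₀⟩ := hΦ ξ V.length
  set W := (φ (mk (pre ξ (max m₀ n)))).toWord
  have hcancel : V.rdrop (S * T) <+: W := bounded_cancellation hS hT <| by
    simpa only [toWord_mk_pre] using pre_prefix_pre ξ (le_max_right m₀ n)
  have hlim : pre (Φ ξ) V.length <+: W := by
    rw [pre, ← hm₀ _ (le_max_left m₀ n)]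
    exact List.take_prefix _ _
  refine cyl_subset_cyl_of_prefix (List.prefix_of_prefix_length_le hcancel hlim ?_)
    (mem_cyl_pre _ _)
  simp [List.rdrop]

theorem exists_forall_mem_cyl_rdrop_symm
    (hS : ∀ a, (φ (of a)).norm ≤ S) (hT : ∀ a, (φ.symm (of a)).norm ≤ T)
    (η : Bd α) :
    ∃ ξ : Bd α, ∀ m, ξ ∈ Cyl ((φ.symm (mk (pre η m))).toWord.rdrop (T * S)) := by
  have hW : ∀ m m', m ≤ m' →
      (φ.symm (mk (pre η m))).toWord.rdrop (T * S) <+: (φ.symm (mk (pre η m'))).toWord :=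
    fun m m' h => bounded_cancellation (ψ := φ.symm) hT hS <| by
      simpa only [toWord_mk_pre] using pre_prefix_pre η h
  refine exists_forall_mem_cyl (fun m => isReduced_toWord.infix (List.take_prefix _ _).isInfix)
    (fun m m' => List.prefix_or_prefix_of_prefix (hW m _ (le_max_left m m'))
      (hW m' _ (le_max_right m m'))) (fun k => ?_)
  obtain ⟨m, hm⟩ := exists_le_norm_map_mk_pre (φ := φ.symm) hS η (k + 1 + T * S)
  exact ⟨m, by simp only [FreeGroup.norm, List.rdrop, List.length_take] at hm ⊢; omega⟩

theorem map_eq_of_forall_mem_cyl_rdrop_symm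
    (hS : ∀ a, (φ (of a)).norm ≤ S) (hT : ∀ a, (φ.symm (of a)).norm ≤ T)
    {Φ : Bd α → Bd α} (hΦ : ExtendsBd φ Φ) {ξ η : Bd α}
    (hξ : ∀ m, ξ ∈ Cyl ((φ.symm (mk (pre η m))).toWord.rdrop (T * S))) : Φ ξ = η := by
  refine eq_of_forall_exists_mem_cyl fun k => ?_
  obtain ⟨n, hn⟩ := exists_le_norm_map_mk_pre hT ξ (k + 1 + S * T)
  obtain ⟨m, hm⟩ := exists_le_norm_map_mk_pre (φ := φ.symm) hS η (n + T * S)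
  have hξn : pre ξ n <+: (φ.symm (mk (pre η m))).toWord := by
    refine (pre_prefix_of_mem_cyl (hξ m) ?_).trans (List.take_prefix _ _)
    simp only [FreeGroup.norm, List.rdrop, List.length_take] at hm ⊢
    omega
  have hcancel := bounded_cancellation hS hT ((toWord_mk_pre ξ n).symm ▸ hξn)
  rw [MulEquiv.apply_symm_apply, toWord_mk_pre] at hcancel
  refine ⟨_, ?_, mem_cyl_rdrop_of_extendsBd hS hT hΦ ξ n,
    cyl_subset_cyl_of_prefix hcancel (mem_cyl_pre η m)⟩
  simp only [FreeGroup.norm, List.rdrop, List.length_take] at hn ⊢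
  omega

theorem mem_cyl_rdrop_toWord
    (hS : ∀ a, (φ (of a)).norm ≤ S) (hT : ∀ a, (φ.symm (of a)).norm ≤ T)
    {g : FreeGroup α} {ξ η : Bd α}
    (hη : η ∈ Cyl ((φ g).toWord.rdrop (S * T)))
    (hξ : ∀ m, ξ ∈ Cyl ((φ.symm (mk (pre η m))).toWord.rdrop (T * S))) :
    ξ ∈ Cyl (g.toWord.rdrop (T * S * T + T * S)) := by
  set D := (φ g).toWord.rdrop (S * T)
  set E := (φ g).toWord.drop ((φ g).toWord.length - S * T)
  have hD : (mk D).toWord = D := toWord_mk_take_toWord _ _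
  have hV : (φ.symm (mk D)).toWord.rdrop (T * S) <+: g.toWord := by
    simpa using bounded_cancellation (ψ := φ.symm) hT hS (x := mk D) (y := φ g)
      (by rw [hD]; exact List.take_prefix _ _)
  have hlen : g.norm ≤ (φ.symm (mk D)).norm + T * (S * T) :=
    calc g.norm = (φ.symm (mk D) * φ.symm (mk E)).norm := by
          rw [← _root_.map_mul, mul_mk,
            show D ++ E = (φ g).toWord from List.take_append_drop _ _, mk_toWord,
            MulEquiv.symm_apply_apply]
      _ ≤ (φ.symm (mk D)).norm + T * (mk E).norm := (FreeGroup.norm_mul_le _ _).trans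
          (add_le_add le_rfl (norm_map_le hT _))
      _ ≤ (φ.symm (mk D)).norm + T * (S * T) := by
          gcongr
          exact norm_mk_le.trans (by simp only [E, List.length_drop]; omega)
  have hξD := hξ D.length
  rw [pre_length_of_mem_cyl hη] at hξD
  refine cyl_subset_cyl_of_prefix
    (List.prefix_of_prefix_length_le (List.take_prefix _ _) hV ?_) hξD
  simp only [List.rdrop, List.length_take, FreeGroup.norm] at hlen ⊢
  have : T * (S * T) = T * S * T := (mul_assoc _ _ _).symm
  omega

end Automorphism

end Bd

theorem stmt12_general [DecidableEq α] [Fintype α]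
    (φ : FreeGroup α ≃* FreeGroup α) (Φ : Bd α → Bd α) (hΦ : ExtendsBd φ Φ)
    (u : FreeGroup α)
    (S : ℕ)
    (hS : S = Finset.univ.sup (fun x : α =>
      max ((φ (FreeGroup.of x)).toWord.length) ((φ.symm (FreeGroup.of x)).toWord.length))) :
    Φ '' Cyl u.toWord =
      ⋃ u' ∈ {z : List (α × Bool) | FreeGroup.reduce z = z ∧
          z.length = u.toWord.length + (S ^ 4 + S ^ 3 + S ^ 2) ∧ u.toWord <+: z},
        Cyl (((φ (FreeGroup.mk u')).toWord).take
          ((φ (FreeGroup.mk u')).toWord.length - S ^ 2)) := by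
  have hmax (a : α) : max (φ (of a)).toWord.length (φ.symm (of a)).toWord.length ≤ S :=
    hS ▸ Finset.le_sup (f := fun x : α =>
      max ((φ (of x)).toWord.length) ((φ.symm (of x)).toWord.length)) (Finset.mem_univ a)
  have hφ (a : α) : (φ (of a)).norm ≤ S := (le_max_left _ _).trans (hmax a)
  have hφ' (a : α) : (φ.symm (of a)).norm ≤ S := (le_max_right _ _).trans (hmax a)
  ext η
  simp only [Set.mem_image, Set.mem_iUnion, Set.mem_ofPred_eq, exists_prop, sq]
  constructor
  · rintro ⟨ξ, hξ, rfl⟩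
    exact ⟨pre ξ _, ⟨(Bd.isReduced_pre ξ _).reduce_eq, Bd.length_pre ξ _,
      Bd.prefix_pre_of_mem_cyl hξ (Nat.le_add_right _ _)⟩,
      Bd.mem_cyl_rdrop_of_extendsBd hφ hφ' hΦ ξ _⟩
  · rintro ⟨u', ⟨hu'red, hu'len, hu'⟩, hη⟩
    obtain ⟨ξ, hξ⟩ := Bd.exists_forall_mem_cyl_rdrop_symm hφ hφ' η
    refine ⟨ξ, Bd.cyl_subset_cyl_of_prefix ?_ (Bd.mem_cyl_rdrop_toWord hφ hφ' hη hξ),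
      Bd.map_eq_of_forall_mem_cyl_rdrop_symm hφ hφ' hΦ hξ⟩
    rw [toWord_mk, hu'red]
    refine List.prefix_of_prefix_length_le hu' (List.take_prefix _ _) ?_
    have : S * S * S + S * S = S ^ 3 + S * S := by ring
    rw [List.rdrop, List.length_take, hu'len, this]
    omega

/-- Ibrahim's formula: `φ(C¹_u) = C¹_U` with
`U = { φ(u')|_{S(φ)²} : u' ∈ u|^k }`, `k = S(φ)⁴ + S(φ)³ + S(φ)²`. -/
theorem stmt12 [DecidableEq α] [Fintype α] [Nontrivial α]
    (φ : FreeGroup α ≃* FreeGroup α) (Φ : Bd α → Bd α) (hΦ : ExtendsBd φ Φ)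
    (u : FreeGroup α)
    (S : ℕ)
    (hS : S = Finset.univ.sup (fun x : α =>
      max ((φ (FreeGroup.of x)).toWord.length) ((φ.symm (FreeGroup.of x)).toWord.length))) :
    Φ '' Cyl u.toWord =
      ⋃ u' ∈ {z : List (α × Bool) | FreeGroup.reduce z = z ∧
          z.length = u.toWord.length + (S ^ 4 + S ^ 3 + S ^ 2) ∧ u.toWord <+: z},
        Cyl (((φ (FreeGroup.mk u')).toWord).take
          ((φ (FreeGroup.mk u')).toWord.length - S ^ 2)) :=
  stmt12_general φ Φ hΦ u S hS
end
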